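/- Let G be a finite group, H ≤ G, R a commutative ring in which the index [G:H] is invertible, and M an R-module with R-linear G-action. Then the fork diagram ⊕_{g ∈ G} M_{H ∩ g⁻¹Hg} ⇉ M_H → M_G — where the two parallel maps are given on the summand indexed by g by the natural projection M_{H∩g⁻¹Hg} → M_H and by the map [m] ↦ [g•m] respectively, and the final map is the natural projection — is a split coequalizer diagram (in particular an absolute coequalizer). -/

import Mathlib

/-!
The section `s` of the projection `e : M_H → M_G` is `[G:H]⁻¹` times the transfer
`[m] ↦ ∑_{xH ∈ G/H} [x⁻¹ • m]`. For `t`, split `G/H` into orbits under `H`, i.e. into double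
cosets `HxH`; the stabilizer of `xH` in `H` is `H ∩ xHx⁻¹`, the subgroup of the summand of
index `x⁻¹`. Take for `t` the sum, over orbit representatives `x`, of `[G:H]⁻¹` times the
transfer `M_H → M_{H ∩ xHx⁻¹}` placed in the summand `x⁻¹`. The first parallel map sends `t` to
the identity because the orbit sizes `[H : H ∩ xHx⁻¹]` add up to `[G:H]`, and the second sends
it to `s ∘ e` because the double coset decomposition reassembles the transfer from `G` to `H`
(Mackey's formula).
-/

open scoped DirectSum

variable {G : Type*} [Group G] [Fintype G] [DecidableEq G] {R : Type*} [CommRing R]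
  {M : Type*} [AddCommGroup M] [Module R M]
  [DistribMulAction G M] [SMulCommClass G R M]

/-- The submodule of `M` generated by the elements `m - k • m` for `k ∈ K`,
so that `M ⧸ coinvAug R M K` is the module of `K`-coinvariants. -/
def coinvAug (R M : Type*) {G : Type*} [Group G] [CommRing R] [AddCommGroup M]
    [Module R M] [DistribMulAction G M] [SMulCommClass G R M] (K : Subgroup G) :
    Submodule R M :=
  Submodule.span R {x : M | ∃ (m : M) (k : G), k ∈ K ∧ x = m - k • m}

/-- The subgroup `H ∩ g⁻¹Hg` of `G`. -/
def conjInter {G : Type*} [Group G] (H : Subgroup G) (g : G) : Subgroup G :=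
  H ⊓ Subgroup.comap (MulAut.conj g).toMonoidHom H

theorem MulAction.sum_eq_sum_sum_quotient_stabilizer {H X A : Type*} [Group H] [MulAction H X]
    [AddCommMonoid A] [Fintype X] [Fintype (orbitRel.Quotient H X)]
    [∀ ω : orbitRel.Quotient H X, Fintype (H ⧸ stabilizer H ω.out)] (F : X → A) :
    ∑ x, F x = ∑ ω : orbitRel.Quotient H X,
      ∑ c : H ⧸ stabilizer H ω.out, F (Quotient.out c • ω.out) := by
  rw [← (selfEquivSigmaOrbitsQuotientStabilizer H X).symm.sum_comp, Fintype.sum_sigma]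
  refine Fintype.sum_congr _ _ fun ω => Fintype.sum_congr _ _ fun c => congrArg F ?_
  conv_lhs => rw [← QuotientGroup.out_eq' c]
  rfl

theorem QuotientGroup.sum_out_congr {K A : Type*} [Group K] [AddCommMonoid A] {S T : Subgroup K}
    (h : S = T) [Fintype (K ⧸ S)] [Fintype (K ⧸ T)] (f : K → A) :
    ∑ c : K ⧸ S, f (Quotient.out c) = ∑ c : K ⧸ T, f (Quotient.out c) := by
  subst h
  convert rfl

theorem smul_nsmul_eq_self_of_mul_eq_one {R N : Type*} [Semiring R] [AddCommMonoid N] [Module R N]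
    {r : R} {n : ℕ} (h : r * n = 1) (x : N) : r • n • x = x := by
  rw [← Nat.cast_smul_eq_nsmul R, smul_smul, h, one_smul]

section Coinvariants

omit [Fintype G] [DecidableEq G]

theorem coinvAug_mono {K K' : Subgroup G} (h : K ≤ K') : coinvAug R M K ≤ coinvAug R M K' :=
  Submodule.span_mono fun _ ⟨m, k, hk, hx⟩ => ⟨m, k, h hk, hx⟩

theorem coinvAug_mk_smul {K : Subgroup G} {k : G} (hk : k ∈ K) (m : M) :
    (Submodule.Quotient.mk (k • m) : M ⧸ coinvAug R M K) = Submodule.Quotient.mk m :=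
  (Submodule.Quotient.eq _).mpr <| by
    simpa using (coinvAug R M K).neg_mem (Submodule.subset_span ⟨m, k, hk, rfl⟩)

theorem coinvAug_mk_out_inv_smul (K : Subgroup G) (y : G) (m : M) :
    (Submodule.Quotient.mk ((Quotient.out (y : G ⧸ K))⁻¹ • m) : M ⧸ coinvAug R M K) =
      Submodule.Quotient.mk (y⁻¹ • m) := by
  obtain ⟨k, hk⟩ := QuotientGroup.mk_out_eq_mul K y
  rw [hk, mul_inv_rev, mul_smul, coinvAug_mk_smul (K.inv_mem k.2)]

theorem coinvAug_mk_subgroupOf_out_inv_smul (A B : Subgroup G) (b : B) (m : M) :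
    (Submodule.Quotient.mk (((Quotient.out (b : B ⧸ A.subgroupOf B) : B) : G)⁻¹ • m) :
        M ⧸ coinvAug R M A) = Submodule.Quotient.mk ((b : G)⁻¹ • m) := by
  obtain ⟨k, hk⟩ := QuotientGroup.mk_out_eq_mul (A.subgroupOf B) b
  rw [hk, Subgroup.coe_mul, mul_inv_rev, mul_smul,
    coinvAug_mk_smul (A.inv_mem (Subgroup.mem_subgroupOf.mp k.2))]

def coinvProj {K K' : Subgroup G} (h : K ≤ K') :
    (M ⧸ coinvAug R M K) →ₗ[R] M ⧸ coinvAug R M K' :=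
  Submodule.mapQ _ _ LinearMap.id (coinvAug_mono h)

@[simp]
theorem coinvProj_mk {K K' : Subgroup G} (h : K ≤ K') (m : M) :
    coinvProj (R := R) h (Submodule.Quotient.mk m) = Submodule.Quotient.mk m :=
  rfl

theorem coinvAug_le_comap_smul {K K' : Subgroup G} {g : G}
    (h : ∀ k ∈ K, g * k * g⁻¹ ∈ K') :
    coinvAug R M K ≤ (coinvAug R M K').comap (DistribSMul.toLinearMap R M g) := by
  rw [coinvAug, Submodule.span_le]
  rintro _ ⟨m, k, hk, rfl⟩
  refine Submodule.subset_span ⟨g • m, g * k * g⁻¹, h k hk, ?_⟩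
  simp [smul_sub, mul_smul]

def coinvSmul {K K' : Subgroup G} (g : G) (h : ∀ k ∈ K, g * k * g⁻¹ ∈ K') :
    (M ⧸ coinvAug R M K) →ₗ[R] M ⧸ coinvAug R M K' :=
  Submodule.mapQ _ _ (DistribSMul.toLinearMap R M g) (coinvAug_le_comap_smul h)

@[simp]
theorem coinvSmul_mk {K K' : Subgroup G} (g : G) (h : ∀ k ∈ K, g * k * g⁻¹ ∈ K') (m : M) :
    coinvSmul (R := R) g h (Submodule.Quotient.mk m) = Submodule.Quotient.mk (g • m) :=
  rfl

noncomputable def transferSum (A B : Subgroup G) [Fintype (B ⧸ A.subgroupOf B)] :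
    M →ₗ[R] M ⧸ coinvAug R M A :=
  ∑ c : B ⧸ A.subgroupOf B,
    (coinvAug R M A).mkQ ∘ₗ DistribSMul.toLinearMap R M ((Quotient.out c : B) : G)⁻¹

theorem transferSum_apply (A B : Subgroup G) [Fintype (B ⧸ A.subgroupOf B)] (m : M) :
    transferSum (R := R) A B m =
      ∑ c : B ⧸ A.subgroupOf B, Submodule.Quotient.mk (((Quotient.out c : B) : G)⁻¹ • m) := by
  simp [transferSum]

theorem transferSum_smul_of_mem (A : Subgroup G) {B : Subgroup G} [Fintype (B ⧸ A.subgroupOf B)]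
    {k : G} (hk : k ∈ B) (m : M) :
    transferSum (R := R) A B (k • m) = transferSum A B m := by
  rw [transferSum_apply, transferSum_apply, ← Equiv.sum_comp (MulAction.toPerm (⟨k, hk⟩ : B))]
  refine Fintype.sum_congr _ _ fun c => ?_
  induction c using QuotientGroup.induction_on with | H b => ?_
  rw [MulAction.toPerm_apply, MulAction.Quotient.smul_mk, coinvAug_mk_subgroupOf_out_inv_smul,
    coinvAug_mk_subgroupOf_out_inv_smul, smul_eq_mul, Subgroup.coe_mul, mul_inv_rev, mul_smul,
    inv_smul_smul]

theorem coinvAug_le_ker_transferSum (A B : Subgroup G) [Fintype (B ⧸ A.subgroupOf B)] :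
    coinvAug R M B ≤ LinearMap.ker (transferSum (R := R) A B) := by
  rw [coinvAug, Submodule.span_le]
  rintro _ ⟨m, k, hk, rfl⟩
  rw [SetLike.mem_coe, LinearMap.mem_ker, map_sub, transferSum_smul_of_mem A hk, sub_self]

noncomputable def coinvTransfer (A B : Subgroup G) [Fintype (B ⧸ A.subgroupOf B)] :
    (M ⧸ coinvAug R M B) →ₗ[R] M ⧸ coinvAug R M A :=
  (coinvAug R M B).liftQ (transferSum A B) (coinvAug_le_ker_transferSum A B)

theorem coinvTransfer_mk (A B : Subgroup G) [Fintype (B ⧸ A.subgroupOf B)] (m : M) :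
    coinvTransfer (R := R) A B (Submodule.Quotient.mk m) =
      ∑ c : B ⧸ A.subgroupOf B, Submodule.Quotient.mk (((Quotient.out c : B) : G)⁻¹ • m) :=
  transferSum_apply A B m

theorem coinvProj_comp_coinvTransfer {A B : Subgroup G} (h : A ≤ B)
    [Fintype (B ⧸ A.subgroupOf B)] :
    coinvProj h ∘ₗ coinvTransfer A B =
      A.relIndex B • (LinearMap.id : _ →ₗ[R] M ⧸ coinvAug R M B) := by
  refine Submodule.linearMap_qext _ (LinearMap.ext fun m => ?_)
  simp only [LinearMap.comp_apply, Submodule.mkQ_apply, coinvTransfer_mk, map_sum, coinvProj_mk,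
    coinvAug_mk_smul (B.inv_mem (Subtype.property _)), Finset.sum_const, Finset.card_univ,
    LinearMap.smul_apply, LinearMap.id_apply, Subgroup.relIndex, Subgroup.index_eq_card,
    Nat.card_eq_fintype_card]

theorem conjInter_le (H : Subgroup G) (g : G) : conjInter H g ≤ H :=
  inf_le_left

theorem mul_mul_inv_mem_of_mem_conjInter {H : Subgroup G} {g k : G} (hk : k ∈ conjInter H g) :
    g * k * g⁻¹ ∈ H :=
  hk.2

theorem conjInter_inv_subgroupOf_eq_stabilizer (H : Subgroup G) (x : G) :
    (conjInter H x⁻¹).subgroupOf H = MulAction.stabilizer H (x : G ⧸ H) := by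
  ext h
  have hsmul : h • (x : G ⧸ H) = ((h * x : G) : G ⧸ H) := rfl
  rw [MulAction.mem_stabilizer_iff, hsmul, QuotientGroup.eq,
    ← inv_mem_iff (x := (_ * x)⁻¹ * x), Subgroup.mem_subgroupOf]
  simp [conjInter, mul_assoc]

end Coinvariants

section Fork

omit [Fintype G]

def coinvSumProj (H : Subgroup G) :
    (⨁ g : G, M ⧸ coinvAug R M (conjInter H g)) →ₗ[R] M ⧸ coinvAug R M H :=
  DirectSum.toModule R G _ fun g => coinvProj (conjInter_le H g)

def coinvSumSmul (H : Subgroup G) :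
    (⨁ g : G, M ⧸ coinvAug R M (conjInter H g)) →ₗ[R] M ⧸ coinvAug R M H :=
  DirectSum.toModule R G _ fun g => coinvSmul g fun _ => mul_mul_inv_mem_of_mem_conjInter

@[simp]
theorem coinvSumProj_lof_mk (H : Subgroup G) (g : G) (m : M) :
    coinvSumProj (R := R) H (DirectSum.lof R G (fun g => M ⧸ coinvAug R M (conjInter H g)) g
      (Submodule.Quotient.mk m)) = Submodule.Quotient.mk m :=
  DirectSum.toModule_lof R _ _

@[simp]
theorem coinvSumSmul_lof_mk (H : Subgroup G) (g : G) (m : M) :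
    coinvSumSmul (R := R) H (DirectSum.lof R G (fun g => M ⧸ coinvAug R M (conjInter H g)) g
      (Submodule.Quotient.mk m)) = Submodule.Quotient.mk (g • m) :=
  DirectSum.toModule_lof R _ _

theorem coinvProj_top_comp_coinvSumProj (H : Subgroup G) :
    (coinvProj le_top : _ →ₗ[R] M ⧸ coinvAug R M ⊤) ∘ₗ coinvSumProj H =
      coinvProj le_top ∘ₗ coinvSumSmul H := by
  refine DirectSum.linearMap_ext R fun g => Submodule.linearMap_qext _ (LinearMap.ext fun m => ?_)
  simp [coinvAug_mk_smul (Subgroup.mem_top g)]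

end Fork

section Mackey

open MulAction
open scoped Classical

noncomputable def orbitRep {H : Subgroup G} (ω : orbitRel.Quotient H (G ⧸ H)) : G :=
  Quotient.out (Quotient.out ω : G ⧸ H)

omit [DecidableEq G] in
theorem sum_quotient_eq_sum_orbitRel {A : Type*} [AddCommMonoid A] (H : Subgroup G)
    (F : G ⧸ H → A) :
    ∑ q, F q = ∑ ω : orbitRel.Quotient H (G ⧸ H),
      ∑ c : H ⧸ (conjInter H (orbitRep ω)⁻¹).subgroupOf H,
        F (((Quotient.out c : H) : G) * orbitRep ω : G) := by
  rw [sum_eq_sum_sum_quotient_stabilizer (H := H)]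
  refine Fintype.sum_congr _ _ fun ω => ?_
  have hrep : ((orbitRep ω : G) : G ⧸ H) = Quotient.out ω := Quotient.out_eq' _
  rw [QuotientGroup.sum_out_congr (f := fun k => F (k • Quotient.out ω))
    (T := (conjInter H (orbitRep ω)⁻¹).subgroupOf H)
    (by rw [conjInter_inv_subgroupOf_eq_stabilizer, hrep])]
  simp only [← hrep]
  rfl

omit [DecidableEq G] in
theorem sum_relIndex_conjInter_orbitRep (H : Subgroup G) :
    ∑ ω : orbitRel.Quotient H (G ⧸ H), (conjInter H (orbitRep ω)⁻¹).relIndex H =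
      H.index := by
  have := sum_quotient_eq_sum_orbitRel H (fun _ => 1)
  simp only [Finset.sum_const, Finset.card_univ, smul_eq_mul, mul_one] at this
  simp only [Subgroup.relIndex, Subgroup.index_eq_card, Nat.card_eq_fintype_card, this]

omit [DecidableEq G] in
theorem coinvTransfer_top_mk (H : Subgroup G) (m : M) :
    coinvTransfer (R := R) H ⊤ (Submodule.Quotient.mk m) =
      ∑ q : G ⧸ H, Submodule.Quotient.mk ((Quotient.out q)⁻¹ • m) := by
  let e : (⊤ : Subgroup G) ⧸ H.subgroupOf ⊤ ≃ G ⧸ H :=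
    Quotient.congr Subgroup.topEquiv.toEquiv fun a b => by
      simp [QuotientGroup.leftRel_apply, Subgroup.mem_subgroupOf]
  rw [coinvTransfer_mk]
  refine Fintype.sum_equiv e _ _ fun c => ?_
  induction c using QuotientGroup.induction_on with | H b => ?_
  exact (coinvAug_mk_subgroupOf_out_inv_smul H ⊤ b m).trans
    (coinvAug_mk_out_inv_smul H b m).symm

noncomputable def mackeyTransfer (H : Subgroup G) :
    (M ⧸ coinvAug R M H) →ₗ[R] ⨁ g : G, M ⧸ coinvAug R M (conjInter H g) :=
  ∑ ω : orbitRel.Quotient H (G ⧸ H),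
    DirectSum.lof R G (fun g => M ⧸ coinvAug R M (conjInter H g)) (orbitRep ω)⁻¹ ∘ₗ
      coinvTransfer (conjInter H (orbitRep ω)⁻¹) H

theorem coinvSumProj_comp_mackeyTransfer (H : Subgroup G) :
    coinvSumProj H ∘ₗ mackeyTransfer H =
      H.index • (LinearMap.id : _ →ₗ[R] M ⧸ coinvAug R M H) := by
  refine Submodule.linearMap_qext _ (LinearMap.ext fun m => ?_)
  simp only [LinearMap.comp_apply, mackeyTransfer, LinearMap.sum_apply, map_sum, coinvSumProj,
    DirectSum.toModule_lof]
  simp only [← LinearMap.comp_apply (coinvProj _), coinvProj_comp_coinvTransfer,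
    LinearMap.smul_apply, ← Finset.sum_smul, sum_relIndex_conjInter_orbitRep]

theorem coinvSumSmul_comp_mackeyTransfer (H : Subgroup G) :
    coinvSumSmul H ∘ₗ mackeyTransfer H =
      coinvTransfer H ⊤ ∘ₗ (coinvProj le_top : _ →ₗ[R] M ⧸ coinvAug R M ⊤) := by
  refine Submodule.linearMap_qext _ (LinearMap.ext fun m => ?_)
  simp only [LinearMap.comp_apply, Submodule.mkQ_apply]
  rw [coinvProj_mk, coinvTransfer_top_mk, sum_quotient_eq_sum_orbitRel]
  simp only [mackeyTransfer, LinearMap.sum_apply, LinearMap.comp_apply, map_sum,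
    coinvTransfer_mk, coinvSumSmul_lof_mk]
  refine Fintype.sum_congr _ _ fun ω => Fintype.sum_congr _ _ fun c => ?_
  rw [coinvAug_mk_out_inv_smul, mul_inv_rev, mul_smul]

end Mackey

/-- If `[G:H]` is invertible in `R`, the fork
`⊕_{g ∈ G} M_{H ∩ g⁻¹Hg} ⇉ M_H → M_G`, with the two parallel maps given on the
summand of index `g` by the natural projection and by `[m] ↦ [g • m]`
respectively, and the final map the natural projection, is a split coequalizer
diagram. -/
theorem coinvariants_split_coequalizer (H : Subgroup G) (hu : IsUnit ((H.index : ℕ) : R)) :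
    ∃ (d0 d1 : (⨁ g : G, M ⧸ coinvAug R M (conjInter H g)) →ₗ[R] M ⧸ coinvAug R M H)
      (e : (M ⧸ coinvAug R M H) →ₗ[R] M ⧸ coinvAug R M (⊤ : Subgroup G))
      (s : (M ⧸ coinvAug R M (⊤ : Subgroup G)) →ₗ[R] M ⧸ coinvAug R M H)
      (t : (M ⧸ coinvAug R M H) →ₗ[R] ⨁ g : G, M ⧸ coinvAug R M (conjInter H g)),
      (∀ (g : G) (m : M),
        d0 (DirectSum.lof R G (fun g => M ⧸ coinvAug R M (conjInter H g)) g
          (Submodule.Quotient.mk m)) = Submodule.Quotient.mk m) ∧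
      (∀ (g : G) (m : M),
        d1 (DirectSum.lof R G (fun g => M ⧸ coinvAug R M (conjInter H g)) g
          (Submodule.Quotient.mk m)) = Submodule.Quotient.mk (g • m)) ∧
      (∀ m : M, e (Submodule.Quotient.mk m) = Submodule.Quotient.mk m) ∧
      e.comp d0 = e.comp d1 ∧
      e.comp s = LinearMap.id ∧
      d0.comp t = LinearMap.id ∧
      d1.comp t = s.comp e := by
  classical
  obtain ⟨r, hr⟩ : ∃ r : R, r * H.index = 1 := ⟨↑hu.unit⁻¹, hu.val_inv_mul⟩
  refine ⟨coinvSumProj H, coinvSumSmul H, coinvProj le_top, r • coinvTransfer H ⊤,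
    r • mackeyTransfer H, coinvSumProj_lof_mk H, coinvSumSmul_lof_mk H, fun _ => rfl,
    coinvProj_top_comp_coinvSumProj H, ?_, ?_, ?_⟩
  · rw [LinearMap.comp_smul, coinvProj_comp_coinvTransfer, Subgroup.relIndex_top_right,
      smul_nsmul_eq_self_of_mul_eq_one hr]
  · rw [LinearMap.comp_smul, coinvSumProj_comp_mackeyTransfer,
      smul_nsmul_eq_self_of_mul_eq_one hr]
  · rw [LinearMap.comp_smul, coinvSumSmul_comp_mackeyTransfer, LinearMap.smul_comp]
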